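/- arXiv:2004.13961 — 2 statements merged into one kernel-verified Lean document; each statement's English description precedes it below -/
import Mathlib

section
/- For all natural numbers j, k, the integral over [−1,1] of φ_j(x)·φ_k(x) equals 2/(2j+1) + 2/(2j+5) if k = j, equals −2/(2j+5) if k = j+2, equals −2/(2k+5) if j = k+2, and equals 0 otherwise. In particular, the one-dimensional Legendre–Galerkin mass matrix is pentadiagonal with zero first off-diagonals. -/
open Polynomial MeasureTheory intervalIntegral Finset

/-- The `n`-th Legendre polynomial, defined by `L_0 = 1`, `L_1 = X`, and the
three-term recurrence `(n+1) L_{n+1} = (2n+1) X L_n - n L_{n-1}`. -/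
noncomputable def legendre : ℕ → Polynomial ℝ
  | 0 => 1
  | 1 => Polynomial.X
  | (n+2) =>
      Polynomial.C ((2*(n:ℝ)+3)/((n:ℝ)+2)) * (Polynomial.X * legendre (n+1))
        - Polynomial.C (((n:ℝ)+1)/((n:ℝ)+2)) * legendre n

/-- The Legendre–Galerkin Dirichlet basis function `φ_k = L_k - L_{k+2}`. -/
noncomputable def phi (k : ℕ) : Polynomial ℝ := legendre k - legendre (k+2)

/-! Expanding `φ_j φ_k` reduces the theorem to the Legendre orthogonality relations
`∫₋₁¹ L_m L_n = 2/(2n+1) δ_{mn}`. Orthogonality comes from the Legendre equation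
`((1 - x²) L_n')' = -n(n+1) L_n`: it is a Sturm–Liouville problem whose weight `1 - x²`
vanishes at `±1`, with distinct eigenvalues. Multiplying the three-term recurrence for
`L_{n+2}` by `L_{n+2}` and that for `L_{n+3}` by `L_{n+1}` and integrating gives
`(2n+5) ‖L_{n+2}‖² = (2n+3) ‖L_{n+1}‖²`, so `(2n+1) ‖L_n‖²` is constant, equal
to `2`. -/

theorem legendre_recurrence (n : ℕ) :
    ((n : ℝ[X]) + 2) * legendre (n + 2)
      = (2 * (n : ℝ[X]) + 3) * (X * legendre (n + 1)) - ((n : ℝ[X]) + 1) * legendre n := by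
  have hC : ∀ a : ℝ, ((n : ℝ[X]) + 2) * C (a / ((n : ℝ) + 2)) = C a := fun a => by
    rw [← C_eq_natCast, ← C_ofNat, ← C_add, ← C_mul, mul_div_cancel₀ _ (by positivity)]
  simp only [legendre, mul_sub, ← mul_assoc, hC, C_add, C_mul, C_eq_natCast, C_ofNat, C_1]

theorem derivative_legendre_succ_relations (n : ℕ) :
    derivative (legendre (n + 1)) = X * derivative (legendre n) + ((n : ℝ[X]) + 1) * legendre n
    ∧ X * derivative (legendre (n + 1))
      = derivative (legendre n) + ((n : ℝ[X]) + 1) * legendre (n + 1) := by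
  induction n with
  | zero => constructor <;> simp [legendre]
  | succ n ih =>
    obtain ⟨hA, hB⟩ := ih
    have hrec := legendre_recurrence n
    have hdrec := congrArg derivative hrec
    simp only [derivative_mul, derivative_add, derivative_sub, derivative_natCast,
      derivative_ofNat, derivative_X, derivative_one, zero_mul, zero_add, add_zero, one_mul,
      mul_zero] at hdrec
    have hn : ((n : ℝ[X]) + 2) ≠ 0 := by exact_mod_cast (by omega : n + 2 ≠ 0)
    push_cast
    constructor
    · apply mul_left_cancel₀ hn
      linear_combination hdrec + ((n : ℝ[X]) + 1) * hB
    · apply mul_left_cancel₀ hn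
      linear_combination (X : ℝ[X]) * hdrec - ((n : ℝ[X]) + 2) * hrec
        + (2 * (n : ℝ[X]) + 3) * X * hB - ((n : ℝ[X]) + 2) * hA

theorem derivative_one_sub_X_sq_mul_derivative_legendre (n : ℕ) :
    derivative ((1 - X ^ 2) * derivative (legendre n))
      = -((n : ℝ[X]) * ((n : ℝ[X]) + 1)) * legendre n := by
  cases n with
  | zero => simp [legendre]
  | succ n =>
    obtain ⟨hA, hB⟩ := derivative_legendre_succ_relations n
    have h : (1 - X ^ 2) * derivative (legendre (n + 1))
        = -(((n : ℝ[X]) + 1) * (X * legendre (n + 1) - legendre n)) := by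
      linear_combination hA - (X : ℝ[X]) * hB
    rw [h]
    simp only [derivative_neg, derivative_mul, derivative_add, derivative_sub,
      derivative_natCast, derivative_X, derivative_one, zero_mul, zero_add, add_zero, one_mul]
    push_cast
    linear_combination -((n : ℝ[X]) + 1) * hB

noncomputable def intervalIntegralPoly (a b : ℝ) : ℝ[X] →ₗ[ℝ] ℝ where
  toFun p := ∫ x in a..b, p.eval x
  map_add' p q := by
    simp only [eval_add]
    exact integral_add (p.continuous.intervalIntegrable _ _) (q.continuous.intervalIntegrable _ _)
  map_smul' c p := by
    simp only [eval_smul, smul_eq_mul, intervalIntegral.integral_const_mul, RingHom.id_apply]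

theorem intervalIntegralPoly_apply (a b : ℝ) (p : ℝ[X]) :
    intervalIntegralPoly a b p = ∫ x in a..b, p.eval x := rfl

theorem intervalIntegralPoly_derivative (a b : ℝ) (p : ℝ[X]) :
    intervalIntegralPoly a b (derivative p) = p.eval b - p.eval a :=
  integral_eq_sub_of_hasDerivAt (fun x _ => p.hasDerivAt x)
    (p.derivative.continuous.intervalIntegrable _ _)

theorem intervalIntegralPoly_C_mul (a b c : ℝ) (p : ℝ[X]) :
    intervalIntegralPoly a b (C c * p) = c * intervalIntegralPoly a b p := by
  rw [C_mul', map_smul, smul_eq_mul]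

theorem intervalIntegralPoly_mul_eq_zero_of_sturmLiouville {a b μ ν : ℝ} {w p q : ℝ[X]}
    (ha : w.eval a = 0) (hb : w.eval b = 0) (hμν : μ ≠ ν)
    (hp : derivative (w * derivative p) = C μ * p)
    (hq : derivative (w * derivative q) = C ν * q) :
    intervalIntegralPoly a b (p * q) = 0 := by
  -- the Wronskian-type expression `w (p' q - p q')` has derivative `(μ - ν) p q`
  have hW : derivative (w * derivative p * q - w * derivative q * p) = C (μ - ν) * (p * q) := by
    rw [derivative_sub, derivative_mul (f := w * derivative p),
      derivative_mul (f := w * derivative q), hp, hq, C_sub]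
    ring
  have h := intervalIntegralPoly_derivative a b (w * derivative p * q - w * derivative q * p)
  rw [hW, intervalIntegralPoly_C_mul] at h
  simp only [eval_sub, eval_mul, ha, hb, zero_mul, sub_zero] at h
  exact (mul_eq_zero.mp h).resolve_left (sub_ne_zero.mpr hμν)

theorem intervalIntegralPoly_legendre_mul_legendre_of_ne {m n : ℕ} (h : m ≠ n) :
    intervalIntegralPoly (-1) 1 (legendre m * legendre n) = 0 := by
  have hanti : StrictAnti fun n : ℕ => -((n : ℝ) * (n + 1)) := fun k l hkl => by
    have : (k : ℝ) + 1 ≤ l := by exact_mod_cast hkl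
    nlinarith [(k.cast_nonneg : (0 : ℝ) ≤ k)]
  refine intervalIntegralPoly_mul_eq_zero_of_sturmLiouville (w := 1 - X ^ 2) (by simp) (by simp)
    (hanti.injective.ne h) ?_ ?_ <;>
  · rw [derivative_one_sub_X_sq_mul_derivative_legendre]
    simp

theorem intervalIntegralPoly_legendre_mul_self_recurrence (n : ℕ) :
    (2 * (n : ℝ) + 5) * intervalIntegralPoly (-1) 1 (legendre (n + 2) * legendre (n + 2))
      = (2 * (n : ℝ) + 3)
        * intervalIntegralPoly (-1) 1 (legendre (n + 1) * legendre (n + 1)) := by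
  have h₁ := legendre_recurrence n
  have h₂ := legendre_recurrence (n + 1)
  push_cast at h₂
  -- `L_{n+2}` times the recurrence for `L_{n+2}`, minus `L_{n+1}` times the one for `L_{n+3}`
  have key : C ((2 * (n : ℝ) + 5) * ((n : ℝ) + 2)) * (legendre (n + 2) * legendre (n + 2))
      = C ((2 * (n : ℝ) + 3) * ((n : ℝ) + 3)) * (legendre (n + 1) * legendre (n + 3))
        + C ((2 * (n : ℝ) + 3) * ((n : ℝ) + 2)) * (legendre (n + 1) * legendre (n + 1))
        - C ((2 * (n : ℝ) + 5) * ((n : ℝ) + 1)) * (legendre n * legendre (n + 2)) := by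
    simp only [C_mul, C_add, C_eq_natCast, C_ofNat, C_1]
    linear_combination (2 * (n : ℝ[X]) + 5) * legendre (n + 2) * h₁
      - (2 * (n : ℝ[X]) + 3) * legendre (n + 1) * h₂
  have h := congrArg (intervalIntegralPoly (-1) 1) key
  simp only [map_sub, map_add, intervalIntegralPoly_C_mul,
    intervalIntegralPoly_legendre_mul_legendre_of_ne (by omega : n + 1 ≠ n + 3),
    intervalIntegralPoly_legendre_mul_legendre_of_ne (by omega : n ≠ n + 2)] at h
  apply mul_left_cancel₀ (by positivity : (n : ℝ) + 2 ≠ 0)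
  linear_combination h

theorem intervalIntegralPoly_legendre_mul_self (n : ℕ) :
    intervalIntegralPoly (-1) 1 (legendre n * legendre n) = 2 / (2 * (n : ℝ) + 1) := by
  rw [eq_div_iff (by positivity), mul_comm]
  induction n using Nat.twoStepInduction with
  | zero => norm_num [intervalIntegralPoly_apply, legendre]
  | one => norm_num [intervalIntegralPoly_apply, legendre, ← sq, integral_pow]
  | more n _ ih =>
    push_cast at ih ⊢
    linear_combination intervalIntegralPoly_legendre_mul_self_recurrence n + ih

theorem intervalIntegralPoly_legendre_mul_legendre (m n : ℕ) :
    intervalIntegralPoly (-1) 1 (legendre m * legendre n)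
      = if m = n then 2 / (2 * (m : ℝ) + 1) else 0 := by
  split_ifs with h
  · rw [h, intervalIntegralPoly_legendre_mul_self]
  · exact intervalIntegralPoly_legendre_mul_legendre_of_ne h

theorem mass_pentadiagonal (j k : ℕ) :
    (∫ x in (-1:ℝ)..1, (phi j).eval x * (phi k).eval x)
      = if k = j then 2/(2*(j:ℝ)+1) + 2/(2*(j:ℝ)+5)
        else if k = j + 2 then -(2/(2*(j:ℝ)+5))
        else if j = k + 2 then -(2/(2*(k:ℝ)+5))
        else 0 := by
  simp only [← eval_mul, ← intervalIntegralPoly_apply, phi, mul_sub, sub_mul, map_sub,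
    intervalIntegralPoly_legendre_mul_legendre]
  split_ifs <;> subst_vars <;> first | omega | (push_cast; ring)
end

section
/- Let p(x) = Σ_{t=0}^{T} α̂_t·L_t(x) be a polynomial of degree at most T. Then for all natural numbers i, j with |i − j| > T + 2, the integral over [−1,1] of p(x)·φ_i(x)·φ_j(x) equals 0. In other words, the matrix with entries (p·φ_i, φ_j) is banded with bandwidth at most T + 2. -/
/-!
Every Legendre polynomial `L_n` is orthogonal on `[-1, 1]` to all polynomials of degree `< n`.
Integrating `q · L_{n+1}` by parts against `L_{n+2} - L_n`, whose derivative is `(2n+3) L_{n+1}`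
and which vanishes at `±1`, lowers the degree of `q`, so this follows by induction on `deg q`.
As `φ_j = L_j - L_{j+2}`, the integral of `p φ_i φ_j` vanishes as soon as
`deg (p φ_i) ≤ T + i + 2 < j`, and symmetrically in `i` and `j`.
-/

open Polynomial MeasureTheory intervalIntegral Finset

lemma natCast_add_two_mul_legendre_add_two (n : ℕ) :
    ((n : ℝ[X]) + 2) * legendre (n + 2)
      = (2 * (n : ℝ[X]) + 3) * X * legendre (n + 1) - ((n : ℝ[X]) + 1) * legendre n := by
  have hn : (n : ℝ) + 2 ≠ 0 := by positivity
  have hC : ((n : ℝ[X]) + 2) = C ((n : ℝ) + 2) := by rw [map_add, map_natCast, map_ofNat]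
  rw [legendre, hC]
  simp only [mul_sub, ← mul_assoc, ← C_mul, mul_div_cancel₀ _ hn]
  simp only [map_add, map_mul, map_natCast, map_ofNat, map_one]

lemma legendre_eval_one : ∀ n : ℕ, (legendre n).eval 1 = 1
  | 0 => by simp [legendre]
  | 1 => by simp [legendre]
  | n + 2 => by
    have h := congrArg (eval 1) (natCast_add_two_mul_legendre_add_two n)
    simp only [eval_mul, eval_sub, eval_add, eval_natCast, eval_ofNat, eval_X, eval_one,
      legendre_eval_one (n + 1), legendre_eval_one n] at h
    exact mul_left_cancel₀ (by positivity : (n : ℝ) + 2 ≠ 0) (by linarith)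

lemma legendre_eval_neg_one : ∀ n : ℕ, (legendre n).eval (-1) = (-1) ^ n
  | 0 => by simp [legendre]
  | 1 => by simp [legendre]
  | n + 2 => by
    have h := congrArg (eval (-1)) (natCast_add_two_mul_legendre_add_two n)
    simp only [eval_mul, eval_sub, eval_add, eval_natCast, eval_ofNat, eval_X, eval_one,
      legendre_eval_neg_one (n + 1), legendre_eval_neg_one n] at h
    exact mul_left_cancel₀ (by positivity : (n : ℝ) + 2 ≠ 0) (by rw [h]; ring)

lemma natDegree_legendre_le : ∀ n : ℕ, (legendre n).natDegree ≤ n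
  | 0 => by simp [legendre]
  | 1 => by simp [legendre]
  | n + 2 => by
    rw [legendre]
    refine (natDegree_sub_le _ _).trans (max_le ?_ ((natDegree_C_mul_le _ _).trans ?_))
    · refine (natDegree_C_mul_le _ _).trans (natDegree_mul_le.trans ?_)
      have := natDegree_legendre_le (n + 1)
      rw [natDegree_X]; omega
    · have := natDegree_legendre_le n
      omega

lemma derivative_legendre_succ : ∀ n : ℕ,
    derivative (legendre (n + 1))
        = X * derivative (legendre n) + ((n : ℝ[X]) + 1) * legendre n ∧
      X * derivative (legendre (n + 1))
        = ((n : ℝ[X]) + 1) * legendre (n + 1) + derivative (legendre n)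
  | 0 => by simp [legendre]
  | n + 1 => by
    obtain ⟨ha, hb⟩ := derivative_legendre_succ n
    have hrec := natCast_add_two_mul_legendre_add_two n
    have hD := congrArg derivative hrec
    simp only [derivative_mul, derivative_sub, derivative_add, derivative_natCast,
      derivative_ofNat, derivative_X, derivative_one] at hD
    have hn : (n : ℝ[X]) + 2 ≠ 0 := by exact_mod_cast (n + 1).succ_ne_zero
    have ha' : derivative (legendre (n + 2))
        = X * derivative (legendre (n + 1)) + ((n : ℝ[X]) + 2) * legendre (n + 1) :=
      mul_left_cancel₀ hn (by linear_combination hD + ((n : ℝ[X]) + 1) * hb)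
    push_cast
    constructor
    · linear_combination ha'
    · linear_combination X * ha' - hrec + X * hb - ha

lemma derivative_legendre_add_two_sub (n : ℕ) :
    derivative (legendre (n + 2) - legendre n) = (2 * (n : ℝ[X]) + 3) * legendre (n + 1) := by
  have ha := (derivative_legendre_succ (n + 1)).1
  push_cast at ha
  rw [derivative_sub]
  linear_combination ha + (derivative_legendre_succ n).2

lemma Polynomial.integral_eval_mul_eval_derivative (p q : ℝ[X]) (a b : ℝ) :
    ∫ x in a..b, p.eval x * (derivative q).eval x
      = p.eval b * q.eval b - p.eval a * q.eval a
        - ∫ x in a..b, (derivative p).eval x * q.eval x :=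
  integral_mul_deriv_eq_deriv_mul (fun x _ => p.hasDerivAt x) (fun x _ => q.hasDerivAt x)
    ((derivative p).continuous.intervalIntegrable a b)
    ((derivative q).continuous.intervalIntegrable a b)

lemma integral_eval_mul_legendre_succ (q : ℝ[X]) (n : ℕ) :
    (2 * n + 3) * ∫ x in (-1 : ℝ)..1, q.eval x * (legendre (n + 1)).eval x
      = -∫ x in (-1 : ℝ)..1,
          (derivative q).eval x * ((legendre (n + 2)).eval x - (legendre n).eval x) := by
  have hibp := q.integral_eval_mul_eval_derivative (legendre (n + 2) - legendre n) (-1) 1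
  simp only [derivative_legendre_add_two_sub, eval_sub, legendre_eval_one, legendre_eval_neg_one,
    pow_add, neg_one_sq, mul_one, sub_self, mul_zero, zero_sub, eval_mul, eval_add, eval_natCast,
    eval_ofNat] at hibp
  rw [← hibp, ← intervalIntegral.integral_const_mul]
  simp_rw [mul_left_comm]

theorem integral_eval_mul_legendre_eq_zero {q : ℝ[X]} {n : ℕ} (hq : q.natDegree < n) :
    ∫ x in (-1 : ℝ)..1, q.eval x * (legendre n).eval x = 0 := by
  induction hk : q.natDegree using Nat.strong_induction_on generalizing q n with
  | _ k ih =>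
  obtain ⟨m, rfl⟩ := Nat.exists_eq_add_one_of_ne_zero (n := n) (by omega)
  have hr : ∫ x in (-1 : ℝ)..1,
      (derivative q).eval x * ((legendre (m + 2)).eval x - (legendre m).eval x) = 0 := by
    rcases eq_or_ne k 0 with rfl | hk0
    · simp [derivative_of_natDegree_zero hk]
    have hdq : (derivative q).natDegree < k := hk ▸ natDegree_derivative_lt (hk ▸ hk0)
    simp only [mul_sub]
    rw [integral_sub (Continuous.intervalIntegrable (by fun_prop) _ _)
      (Continuous.intervalIntegrable (by fun_prop) _ _),
      ih _ hdq (by omega) rfl, ih _ hdq (by omega) rfl, sub_zero]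
  have h := integral_eval_mul_legendre_succ q m
  rw [hr, neg_zero] at h
  exact (mul_eq_zero.mp h).resolve_left (by positivity)

lemma natDegree_phi_le (k : ℕ) : (phi k).natDegree ≤ k + 2 :=
  (natDegree_sub_le _ _).trans
    (max_le ((natDegree_legendre_le k).trans (by omega)) (natDegree_legendre_le _))

theorem integral_eval_mul_phi_eq_zero {q : ℝ[X]} {n : ℕ} (hq : q.natDegree < n) :
    ∫ x in (-1 : ℝ)..1, q.eval x * (phi n).eval x = 0 := by
  simp only [phi, eval_sub, mul_sub]
  rw [integral_sub (Continuous.intervalIntegrable (by fun_prop) _ _)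
    (Continuous.intervalIntegrable (by fun_prop) _ _),
    integral_eval_mul_legendre_eq_zero hq, integral_eval_mul_legendre_eq_zero (by omega), sub_zero]

theorem integral_eval_mul_phi_mul_phi_eq_zero {p : ℝ[X]} {i j : ℕ}
    (hij : p.natDegree + i + 2 < j) :
    ∫ x in (-1 : ℝ)..1, p.eval x * (phi i).eval x * (phi j).eval x = 0 := by
  have hdeg : (p * phi i).natDegree < j :=
    natDegree_mul_le.trans_lt (by have := natDegree_phi_le i; omega)
  simpa only [eval_mul] using integral_eval_mul_phi_eq_zero hdeg

lemma natDegree_sum_C_mul_legendre_le (T : ℕ) (a : ℕ → ℝ) :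
    (∑ t ∈ range (T + 1), C (a t) * legendre t).natDegree ≤ T :=
  natDegree_sum_le_of_forall_le _ _ fun t ht =>
    (natDegree_C_mul_le _ _).trans
      ((natDegree_legendre_le t).trans (Nat.lt_succ_iff.mp (mem_range.mp ht)))

theorem mass_banded (T : ℕ) (alphaHat : ℕ → ℝ) (i j : ℕ)
    (h : ((T:ℤ) + 2) < |(i:ℤ) - (j:ℤ)|) :
    (∫ x in (-1:ℝ)..1,
      (∑ t ∈ Finset.range (T+1), alphaHat t * (legendre t).eval x) *
        (phi i).eval x * (phi j).eval x) = 0 := by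
  set p : ℝ[X] := ∑ t ∈ range (T + 1), C (alphaHat t) * legendre t
  have hp : p.natDegree ≤ T := natDegree_sum_C_mul_legendre_le T alphaHat
  have hp_eval (x : ℝ) : ∑ t ∈ range (T + 1), alphaHat t * (legendre t).eval x = p.eval x := by
    simp [p, eval_finsetSum]
  simp_rw [hp_eval]
  rcases lt_abs.mp h with hji | hij
  · simp_rw [mul_right_comm _ ((phi i).eval _)]
    exact integral_eval_mul_phi_mul_phi_eq_zero (by omega)
  · exact integral_eval_mul_phi_mul_phi_eq_zero (by omega)
end
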